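/- arXiv:1305.2867 — 9 statements merged into one kernel-verified Lean document; each statement's English description precedes it below -/
import Mathlib

section
/- For ρ ∈ (0,1) with chemical potential φ = log(ρ/(1-ρ)), define S_{ρ,ρ}(E) = -s((-E + log(1+e^φ))/φ) where s(θ)=θ log θ+(1-θ)log(1-θ) (for φ ≠ 0). Then the Legendre-type transform inf over E of {θE - S_{ρ,ρ}(E)} equals P(φ,θ) = θ log(1+e^φ) - log(1+e^{φθ}). -/
/-!
Substituting `E = log (1 + e^φ) - φ u` turns `θ E - S_{ρ,ρ}(E)` into
`θ log (1 + e^φ) + (s(u) - φθ u)` with `u ∈ (0,1)`, so the claim is the variational formula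
`inf_u (s(u) - a u) = -log (1 + e^a)` for `a = φθ`: the gap `s(u) - a u + log (1 + e^a)` is the
binary Kullback–Leibler divergence from `u` to `σ(a) = e^a / (1 + e^a)`, hence nonnegative and zero
at `u = σ(a)`. As `ρ ≠ 1/2`, `φ ≠ 0` and the substitution is a bijection.
-/

noncomputable def entS (θ : ℝ) : ℝ := θ * Real.log θ + (1 - θ) * Real.log (1 - θ)

noncomputable def Srr (φ E : ℝ) : ℝ := - entS ((-E + Real.log (1 + Real.exp φ)) / φ)

noncomputable def Pfun (φ θ : ℝ) : ℝ :=
  θ * Real.log (1 + Real.exp φ) - Real.log (1 + Real.exp (φ * θ))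

open Real Set

lemma mul_log_le_mul_log_add_sub {u p : ℝ} (hu : 0 ≤ u) (hp : 0 < p) :
    u * log p ≤ u * log u + p - u := by
  rcases hu.eq_or_lt with rfl | hu
  · simpa using hp.le
  have h := log_le_sub_one_of_pos (div_pos hp hu)
  rw [log_div hp.ne' hu.ne'] at h
  have : u * (p / u - 1) = p - u := by field_simp
  nlinarith [mul_le_mul_of_nonneg_left h hu.le]

lemma log_one_sub_sigmoid (a : ℝ) : log (1 - sigmoid a) = -log (1 + exp a) := by
  rw [← sigmoid_neg, sigmoid_def, neg_neg, log_inv]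

lemma log_sigmoid (a : ℝ) : log (sigmoid a) = a - log (1 + exp a) := by
  have h := congrArg log (sigmoid_mul_rexp_neg a)
  rw [log_mul (sigmoid_pos a).ne' (exp_ne_zero _), log_exp, sigmoid_neg,
    log_one_sub_sigmoid] at h
  linarith

lemma entS_sigmoid (a : ℝ) : entS (sigmoid a) = a * sigmoid a - log (1 + exp a) := by
  rw [entS, log_sigmoid, log_one_sub_sigmoid]
  ring

lemma neg_log_one_add_exp_le_entS_sub_mul (a : ℝ) {u : ℝ} (hu : u ∈ Icc 0 1) :
    -log (1 + exp a) ≤ entS u - a * u := by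
  have h₁ := mul_log_le_mul_log_add_sub hu.1 (sigmoid_pos a)
  have h₂ := mul_log_le_mul_log_add_sub (sub_nonneg.2 hu.2) (sub_pos.2 (sigmoid_lt_one a))
  rw [log_sigmoid] at h₁
  rw [log_one_sub_sigmoid] at h₂
  rw [entS]
  linarith

lemma isLeast_entS_sub_mul (a : ℝ) :
    IsLeast ((fun u ↦ entS u - a * u) '' Ioo 0 1) (-log (1 + exp a)) := by
  refine ⟨⟨sigmoid a, ⟨sigmoid_pos a, sigmoid_lt_one a⟩, ?_⟩, ?_⟩
  · simp only [entS_sigmoid]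
    ring
  · rintro _ ⟨u, hu, rfl⟩
    exact neg_log_one_add_exp_le_entS_sub_mul a (Ioo_subset_Icc_self hu)

lemma log_div_one_sub_ne_zero {ρ : ℝ} (hρ : ρ ∈ Ioo 0 1) (hρ' : ρ ≠ 1 / 2) :
    log (ρ / (1 - ρ)) ≠ 0 := by
  have h₁ : 0 < 1 - ρ := sub_pos.2 hρ.2
  refine log_ne_zero_of_pos_of_ne_one (div_pos hρ.1 h₁) fun h ↦ hρ' ?_
  rw [div_eq_one_iff_eq h₁.ne'] at h
  linarith

lemma isLeast_legendre_Srr {φ : ℝ} (hφ : φ ≠ 0) (θ : ℝ) :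
    IsLeast {x : ℝ | ∃ E : ℝ, (-E + log (1 + exp φ)) / φ ∈ Ioo (0:ℝ) 1 ∧ x = θ * E - Srr φ E}
      (Pfun φ θ) := by
  set L := log (1 + exp φ)
  have harg (u : ℝ) : (-(L - φ * u) + L) / φ = u := by field_simp; ring
  have hSrr (u : ℝ) : θ * (L - φ * u) - Srr φ (L - φ * u) = θ * L + (entS u - φ * θ * u) := by
    rw [Srr, harg]
    ring
  obtain ⟨⟨u₀, hu₀, hmin : entS u₀ - φ * θ * u₀ = _⟩, hlow⟩ := isLeast_entS_sub_mul (φ * θ)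
  refine ⟨⟨L - φ * u₀, ?_, ?_⟩, ?_⟩
  · rwa [harg]
  · rw [hSrr, Pfun]
    linarith
  · rintro x ⟨E, hu, rfl⟩
    obtain ⟨u, rfl⟩ : ∃ u, E = L - φ * u := ⟨(-E + L) / φ, by field_simp; ring⟩
    rw [hSrr, Pfun]
    have := hlow ⟨u, by rwa [harg] at hu, rfl⟩
    linarith

theorem stmt_4 (ρ : ℝ) (hρ : ρ ∈ Set.Ioo (0:ℝ) 1) (hρ' : ρ ≠ 1/2)
    (φ : ℝ) (hφ : φ = Real.log (ρ / (1 - ρ))) (θ : ℝ) :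
    sInf {x : ℝ | ∃ E : ℝ,
        (-E + Real.log (1 + Real.exp φ)) / φ ∈ Set.Ioo (0:ℝ) 1 ∧
        x = θ * E - Srr φ E} = Pfun φ θ :=
  (isLeast_legendre_Srr (hφ ▸ log_div_one_sub_ne_zero hρ hρ') θ).csInf_eq
end

section
/- For ρ ∈ (0,1), ρ ≠ 1/2, with φ = log(ρ/(1-ρ)), the function E ↦ S_{ρ,ρ}(-E) := -s((E + log(1+e^φ))/φ) is concave on the interval [-log(1+e^{-|φ|}), -log(1+e^{|φ|})], vanishes at both endpoints, is positive in the interior, and attains its maximum log 2 at E₀ = φ/2 - log(1+e^φ). -/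
/-!
`-s` is the binary entropy `h`, and `E ↦ (E + log (1 + e^φ)) / φ` is affine, sending the
endpoints `-log (1 + e^φ)` and `φ - log (1 + e^φ) = -log (1 + e^{-φ})` to `0` and `1`.
Since `h (1 - p) = h p`, replacing `φ` by `|φ|` does not change the function, and for `φ > 0`
it is `h` transported along the increasing affine bijection `[lo, hi] → [0, 1]`; concavity,
vanishing at the endpoints, positivity inside and the bound `h ≤ log 2 = h (1/2)` all come
from `h`.
-/

open Real Set

lemma neg_entS_eq_binEntropy (x : ℝ) : -entS x = binEntropy x := by
  simp only [entS, binEntropy, log_inv]; ring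

lemma log_one_add_exp_neg (x : ℝ) : log (1 + exp (-x)) = log (1 + exp x) - x := by
  rw [eq_sub_iff_add_eq, ← log_exp x, ← log_mul (by positivity) (exp_pos x).ne', log_exp,
    add_mul, one_mul, ← exp_add, neg_add_cancel, exp_zero, add_comm]

lemma binEntropy_add_log_one_add_exp_div_abs (φ E : ℝ) :
    binEntropy ((E + log (1 + exp φ)) / φ) = binEntropy ((E + log (1 + exp |φ|)) / |φ|) := by
  rcases eq_or_ne φ 0 with rfl | hφ
  · simp
  rcases abs_choice φ with h | h <;> rw [h]
  rw [← binEntropy_one_sub, log_one_add_exp_neg]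
  congr 1
  field_simp
  ring

section
variable {a b : ℝ} (hab : a < b)
include hab

lemma concaveOn_binEntropy_div_sub :
    ConcaveOn ℝ (Icc a b) (fun x => binEntropy ((x - a) / (b - a))) := by
  have hba : 0 < b - a := sub_pos.2 hab
  let g : ℝ →ᵃ[ℝ] ℝ := (b - a)⁻¹ • (AffineMap.id ℝ ℝ - AffineMap.const ℝ ℝ a)
  have hg (x : ℝ) : g x = (x - a) / (b - a) := inv_mul_eq_div _ _
  have hmaps : Icc a b ⊆ g ⁻¹' Icc 0 1 := fun x ⟨hax, hxb⟩ => by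
    rw [mem_preimage, hg]
    exact ⟨div_nonneg (by linarith) hba.le, (div_le_one hba).2 (by linarith)⟩
  simpa only [Function.comp_def, hg] using
    (strictConcave_binEntropy.concaveOn.comp_affineMap g).subset hmaps (convex_Icc a b)

lemma binEntropy_div_sub_pos {x : ℝ} (hx : x ∈ Ioo a b) :
    0 < binEntropy ((x - a) / (b - a)) :=
  binEntropy_pos (div_pos (sub_pos.2 hx.1) (sub_pos.2 hab))
    ((div_lt_one (sub_pos.2 hab)).2 (by linarith [hx.2]))

end

theorem stmt_5 (ρ : ℝ) (hρ : ρ ∈ Set.Ioo (0:ℝ) 1) (hρ' : ρ ≠ 1/2)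
    (φ : ℝ) (hφ : φ = Real.log (ρ / (1 - ρ)))
    (f : ℝ → ℝ) (hf : f = fun E => - entS ((E + Real.log (1 + Real.exp φ)) / φ))
    (lo hi E₀ : ℝ)
    (hlo : lo = - Real.log (1 + Real.exp |φ|))
    (hhi : hi = - Real.log (1 + Real.exp (-|φ|)))
    (hE₀ : E₀ = φ / 2 - Real.log (1 + Real.exp φ)) :
    ConcaveOn ℝ (Set.Icc lo hi) f ∧
    f lo = 0 ∧ f hi = 0 ∧
    (∀ E ∈ Set.Ioo lo hi, 0 < f E) ∧
    f E₀ = Real.log 2 ∧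
    (∀ E ∈ Set.Icc lo hi, f E ≤ Real.log 2) := by
  have hφ0 : φ ≠ 0 := hφ ▸ log_div_one_sub_ne_zero hρ hρ'
  have hfE₀ : f E₀ = log 2 := by
    rw [hf, hE₀]
    beta_reduce
    rw [neg_entS_eq_binEntropy, sub_add_cancel, div_div_cancel_left' hφ0,
      binEntropy_two_inv]
  have hlohi : lo < hi := by
    rw [hlo, hhi, log_one_add_exp_neg]
    linarith [abs_pos.2 hφ0]
  have hf' : f = fun E => binEntropy ((E - lo) / (hi - lo)) := by
    funext E
    rw [hf]
    beta_reduce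
    rw [neg_entS_eq_binEntropy, binEntropy_add_log_one_add_exp_div_abs, hlo, hhi,
      log_one_add_exp_neg]
    congr 1
    ring
  subst hf'
  refine ⟨concaveOn_binEntropy_div_sub hlohi, ?_, ?_,
    fun E hE => binEntropy_div_sub_pos hlohi hE, hfE₀, fun E _ => binEntropy_le_log_two⟩
  · beta_reduce
    rw [sub_self, zero_div, binEntropy_zero]
  · beta_reduce
    rw [div_self (sub_ne_zero.2 hlohi.ne'), binEntropy_one]
end

section
/- For ρ ∈ (0,1), ρ ≠ 1/2, the point E₀(ρ) = -ρ log(1-ρ) - (1-ρ) log ρ satisfies E₀(ρ) ≥ -φ/2 + log(1+e^φ) where φ = log(ρ/(1-ρ)); that is, E₀(ρ) lies to the right of the maximizer of the function E ↦ S_{ρ,ρ}(E). -/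
open Real

theorem Real.sub_mul_log_sub_log_nonneg {a b : ℝ} (ha : 0 < a) (hb : 0 < b) :
    0 ≤ (a - b) * (log a - log b) := by
  rcases le_total a b with hab | hab
  · exact mul_nonneg_of_nonpos_of_nonpos (by linarith) (by linarith [log_le_log ha hab])
  · exact mul_nonneg (by linarith) (by linarith [log_le_log hb hab])

theorem Real.log_one_add_exp_log_div_one_sub {ρ : ℝ} (h0 : 0 < ρ) (h1 : ρ < 1) :
    log (1 + exp (log (ρ / (1 - ρ)))) = -log (1 - ρ) := by
  have h1' : 0 < 1 - ρ := sub_pos.mpr h1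
  rw [exp_log (div_pos h0 h1'), show 1 + ρ / (1 - ρ) = (1 - ρ)⁻¹ by field_simp; ring, log_inv]

theorem stmt_8_general (ρ : ℝ) (hρ : ρ ∈ Set.Ioo (0:ℝ) 1)
    (φ : ℝ) (hφ : φ = Real.log (ρ / (1 - ρ))) :
    -ρ * Real.log (1 - ρ) - (1 - ρ) * Real.log ρ ≥ -φ / 2 + Real.log (1 + Real.exp φ) := by
  obtain ⟨h0, h1⟩ := hρ
  have h1' : 0 < 1 - ρ := sub_pos.mpr h1
  subst hφ
  rw [log_one_add_exp_log_div_one_sub h0 h1, log_div h0.ne' h1'.ne']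
  -- the difference of the two sides is `(ρ - (1 - ρ)) (log ρ - log (1 - ρ)) / 2`
  linear_combination sub_mul_log_sub_log_nonneg h0 h1' / 2

theorem stmt_8 (ρ : ℝ) (hρ : ρ ∈ Set.Ioo (0:ℝ) 1) (hρ' : ρ ≠ 1/2)
    (φ : ℝ) (hφ : φ = Real.log (ρ / (1 - ρ))) :
    -ρ * Real.log (1 - ρ) - (1 - ρ) * Real.log ρ ≥ -φ / 2 + Real.log (1 + Real.exp φ) :=
  stmt_8_general ρ hρ φ hφ
end

section
/- Let φ₋ < φ₊ and define W(φ₋,φ₊) = (φ₋ log(1+e^{φ₊}) - φ₊ log(1+e^{φ₋}))/(φ₊ - φ₋). If φ₋ < φ₊ ≤ 0 then -log(1+e^{-φ₋}) < -log(1+e^{-φ₊}) ≤ W(φ₋,φ₊) ≤ -log(1+e^{φ₊}) < -log(1+e^{φ₋}). -/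
theorem stmt_10 (φm φp : ℝ) (h1 : φm < φp) (h2 : φp ≤ 0)
    (W : ℝ)
    (hW : W = (φm * Real.log (1 + Real.exp φp) - φp * Real.log (1 + Real.exp φm)) / (φp - φm)) :
    - Real.log (1 + Real.exp (-φm)) < - Real.log (1 + Real.exp (-φp)) ∧
    - Real.log (1 + Real.exp (-φp)) ≤ W ∧
    W ≤ - Real.log (1 + Real.exp φp) ∧
    - Real.log (1 + Real.exp φp) < - Real.log (1 + Real.exp φm) := by
  have hd : 0 < φp - φm := by linarith
  have e1 : ∀ x : ℝ, (0:ℝ) < 1 + Real.exp x := fun x => by positivity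
  have hlogid : ∀ x : ℝ, Real.log (1 + Real.exp (-x)) = -x + Real.log (1 + Real.exp x) := by
    intro x
    have h : 1 + Real.exp (-x) = Real.exp (-x) * (1 + Real.exp x) := by
      rw [mul_add, mul_one, ← Real.exp_add]
      ring_nf
      rw [Real.exp_zero]; ring
    rw [h, Real.log_mul (Real.exp_ne_zero _) (ne_of_gt (e1 x)), Real.log_exp]
  set Lp := Real.log (1 + Real.exp φp) with hLp
  set Lm := Real.log (1 + Real.exp φm) with hLm
  have hLlt : Lm < Lp := by
    apply Real.log_lt_log (e1 φm)
    have := Real.exp_lt_exp.2 h1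
    linarith
  have hneg : Real.log (1 + Real.exp (-φp)) < Real.log (1 + Real.exp (-φm)) := by
    apply Real.log_lt_log (e1 (-φp))
    have := Real.exp_lt_exp.2 (neg_lt_neg h1)
    linarith
  have hxi : Lp - Lm ≤ φp - φm := by
    have h1' := hlogid φp
    have h2' := hlogid φm
    linarith
  refine ⟨by linarith, ?_, ?_, by linarith⟩
  · rw [hW, hlogid φp, le_div_iff₀ hd]
    nlinarith [mul_le_mul_of_nonpos_left hxi h2]
  · rw [hW, div_le_iff₀ hd]
    nlinarith [mul_nonneg (neg_nonneg.2 h2) (le_of_lt (sub_pos.2 hLlt))]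
end

section
/- Let φ₋ < φ₊ ≤ 0. Then ξ₀ = (log(1+e^{φ₊})-log(1+e^{φ₋}))/(φ₊-φ₋) < 1/2, and consequently W(φ₋,φ₊) = (φ₋ log(1+e^{φ₊}) - φ₊ log(1+e^{φ₋}))/(φ₊-φ₋) ≥ φ₊/2 - log(1+e^{φ₊}). -/
theorem stmt_11 (φm φp : ℝ) (h1 : φm < φp) (h2 : φp ≤ 0) :
    (Real.log (1 + Real.exp φp) - Real.log (1 + Real.exp φm)) / (φp - φm) < 1/2 ∧
    (φm * Real.log (1 + Real.exp φp) - φp * Real.log (1 + Real.exp φm)) / (φp - φm)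
      ≥ φp / 2 - Real.log (1 + Real.exp φp) := by
  have hpos : ∀ x : ℝ, (0:ℝ) < 1 + Real.exp x := fun x => by positivity
  have hderiv : ∀ x ∈ Set.Ioo φm φp,
      HasDerivAt (fun x => Real.log (1 + Real.exp x)) (Real.exp x / (1 + Real.exp x)) x := by
    intro x _
    have h := ((Real.hasDerivAt_exp x).const_add 1).log (ne_of_gt (hpos x))
    simpa using h
  have hcont : ContinuousOn (fun x => Real.log (1 + Real.exp x)) (Set.Icc φm φp) := by
    apply ContinuousOn.log
    · fun_prop
    · intro x _; exact ne_of_gt (hpos x)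
  obtain ⟨c, hc, hceq⟩ := exists_hasDerivAt_eq_slope (fun x => Real.log (1 + Real.exp x))
    (fun x => Real.exp x / (1 + Real.exp x)) h1 hcont hderiv
  have hc0 : c < 0 := lt_of_lt_of_le hc.2 h2
  have hec : Real.exp c < 1 := Real.exp_lt_one_iff.mpr hc0
  have hxi : (Real.log (1 + Real.exp φp) - Real.log (1 + Real.exp φm)) / (φp - φm) < 1/2 := by
    rw [← hceq]
    rw [div_lt_div_iff₀ (hpos c) (by norm_num)]
    linarith
  refine ⟨hxi, ?_⟩
  have hd : (0:ℝ) < φp - φm := by linarith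
  set Lp := Real.log (1 + Real.exp φp)
  set Lm := Real.log (1 + Real.exp φm)
  have hW : (φm * Lp - φp * Lm) / (φp - φm)
      = φp * ((Lp - Lm) / (φp - φm)) - Lp := by
    field_simp
    ring
  rw [hW]
  nlinarith [hxi, h2]
end

section
/- For θ ∈ ℝ define f_θ : ℝ → (0,∞) by f_θ(t) = exp((1/θ) log(1+e^{θt}) + log(1+e^{-t})) for θ ≠ 0 and f₀(t) = exp(t/2 + log(1+e^{-t})). Then: if θ > -1, f_θ is decreasing on (-∞,0) and increasing on (0,∞); if θ < -1, f_θ is increasing on (-∞,0) and decreasing on (0,∞); and f_{-1} is constant equal to 1. -/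
/-!
Write `fTheta θ = exp ∘ logFTheta θ`. Since `log (1 + exp x)` has derivative `sigmoid x`, the
exponent has derivative `sigmoid (θ t) - sigmoid (-t)` for every `θ` (the case `θ = 0`, where the
first term is `t / 2`, is its limit, as `sigmoid 0 = 1 / 2`). The sigmoid is strictly increasing, so
the sign of this derivative is the sign of `θ t - (-t) = (θ + 1) t`.
-/

noncomputable def fTheta (θ t : ℝ) : ℝ :=
  if θ = 0 then Real.exp (t / 2 + Real.log (1 + Real.exp (-t)))
  else Real.exp ((1 / θ) * Real.log (1 + Real.exp (θ * t)) + Real.log (1 + Real.exp (-t)))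

open Real Set

noncomputable def logFTheta (θ t : ℝ) : ℝ :=
  if θ = 0 then t / 2 + log (1 + exp (-t))
  else (1 / θ) * log (1 + exp (θ * t)) + log (1 + exp (-t))

lemma fTheta_eq_exp_comp (θ : ℝ) : fTheta θ = exp ∘ logFTheta θ := by
  funext t
  unfold fTheta logFTheta
  split_ifs <;> rfl

lemma sigmoid_eq_exp_div (x : ℝ) : sigmoid x = exp x / (1 + exp x) := by
  rw [sigmoid_def, exp_neg]
  field_simp
  ring

lemma hasDerivAt_log_one_add_exp (x : ℝ) :
    HasDerivAt (fun x => log (1 + exp x)) (sigmoid x) x := by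
  rw [sigmoid_eq_exp_div]
  exact ((hasDerivAt_exp x).const_add 1).log (by positivity)

lemma hasDerivAt_log_one_add_exp_mul (c t : ℝ) :
    HasDerivAt (fun t => log (1 + exp (c * t))) (sigmoid (c * t) * c) t :=
  (hasDerivAt_log_one_add_exp (c * t)).comp t (hasDerivAt_const_mul c)

lemma hasDerivAt_logFTheta (θ t : ℝ) :
    HasDerivAt (logFTheta θ) (sigmoid (θ * t) - sigmoid (-t)) t := by
  have hneg : HasDerivAt (fun t => log (1 + exp (-t))) (-sigmoid (-t)) t := by
    simpa using hasDerivAt_log_one_add_exp_mul (-1) t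
  by_cases hθ : θ = 0
  · have hlin : HasDerivAt (fun t : ℝ => t / 2) (sigmoid 0) t := by
      simpa [sigmoid_zero] using (hasDerivAt_id t).div_const 2
    have hfun : logFTheta θ = fun t => t / 2 + log (1 + exp (-t)) := by
      funext t
      simp [logFTheta, hθ]
    rw [hfun, hθ, zero_mul, sub_eq_add_neg]
    exact hlin.add hneg
  · have hpos : HasDerivAt (fun t => 1 / θ * log (1 + exp (θ * t))) (sigmoid (θ * t)) t := by
      refine ((hasDerivAt_log_one_add_exp_mul θ t).const_mul (1 / θ)).congr_deriv ?_
      field_simp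
    have hfun : logFTheta θ = fun t => 1 / θ * log (1 + exp (θ * t)) + log (1 + exp (-t)) := by
      funext t
      simp [logFTheta, hθ]
    rw [hfun, sub_eq_add_neg]
    exact hpos.add hneg

lemma continuous_logFTheta (θ : ℝ) : Continuous (logFTheta θ) :=
  Differentiable.continuous fun t => (hasDerivAt_logFTheta θ t).differentiableAt

lemma deriv_logFTheta_pos {θ t : ℝ} (h : 0 < (θ + 1) * t) : 0 < deriv (logFTheta θ) t := by
  rw [(hasDerivAt_logFTheta θ t).deriv, sub_pos, sigmoid_lt_iff]
  linarith

lemma deriv_logFTheta_neg {θ t : ℝ} (h : (θ + 1) * t < 0) : deriv (logFTheta θ) t < 0 := by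
  rw [(hasDerivAt_logFTheta θ t).deriv, sub_neg, sigmoid_lt_iff]
  linarith

lemma strictMonoOn_fTheta {θ : ℝ} {s : Set ℝ} (hs : Convex ℝ s)
    (h : ∀ t ∈ interior s, 0 < (θ + 1) * t) : StrictMonoOn (fTheta θ) s := by
  have hlog : StrictMonoOn (logFTheta θ) s :=
    strictMonoOn_of_deriv_pos hs (continuous_logFTheta θ).continuousOn
      fun t ht => deriv_logFTheta_pos (h t ht)
  rw [fTheta_eq_exp_comp]
  exact exp_strictMono.comp_strictMonoOn hlog

lemma strictAntiOn_fTheta {θ : ℝ} {s : Set ℝ} (hs : Convex ℝ s)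
    (h : ∀ t ∈ interior s, (θ + 1) * t < 0) : StrictAntiOn (fTheta θ) s := by
  have hlog : StrictAntiOn (logFTheta θ) s :=
    strictAntiOn_of_deriv_neg hs (continuous_logFTheta θ).continuousOn
      fun t ht => deriv_logFTheta_neg (h t ht)
  rw [fTheta_eq_exp_comp]
  exact exp_strictMono.comp_strictAntiOn hlog

theorem stmt_12 :
    (∀ θ : ℝ, -1 < θ →
      StrictAntiOn (fTheta θ) (Set.Iio (0:ℝ)) ∧ StrictMonoOn (fTheta θ) (Set.Ioi (0:ℝ))) ∧
    (∀ θ : ℝ, θ < -1 →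
      StrictMonoOn (fTheta θ) (Set.Iio (0:ℝ)) ∧ StrictAntiOn (fTheta θ) (Set.Ioi (0:ℝ))) ∧
    (∀ t : ℝ, fTheta (-1) t = 1) := by
  refine ⟨fun θ hθ => ⟨?_, ?_⟩, fun θ hθ => ⟨?_, ?_⟩, fun t => ?_⟩
  · refine strictAntiOn_fTheta (convex_Iio 0) fun t ht => ?_
    exact mul_neg_of_pos_of_neg (by linarith) (interior_Iio.subset ht)
  · refine strictMonoOn_fTheta (convex_Ioi 0) fun t ht => ?_
    exact mul_pos (by linarith) (interior_Ioi.subset ht)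
  · refine strictMonoOn_fTheta (convex_Iio 0) fun t ht => ?_
    exact mul_pos_of_neg_of_neg (by linarith) (interior_Iio.subset ht)
  · refine strictAntiOn_fTheta (convex_Ioi 0) fun t ht => ?_
    exact mul_neg_of_neg_of_pos (by linarith) (interior_Ioi.subset ht)
  · simp [fTheta]
end

section
/- The function ψ(t) = log(1+e^{-t}) + t/(1+e^t) is increasing on (-∞,0); equivalently t ↦ -log(1+e^{-t}) - t/(1+e^t) is decreasing on (-∞,0]. -/
noncomputable def psiFun (t : ℝ) : ℝ := Real.log (1 + Real.exp (-t)) + t / (1 + Real.exp t)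

open Real Set

lemma hasDerivAt_psiFun (t : ℝ) :
    HasDerivAt psiFun (-t * exp t / (1 + exp t) ^ 2) t := by
  have hlog : HasDerivAt (fun s => log (1 + exp (-s))) (-exp (-t) / (1 + exp (-t))) t := by
    have hinner : HasDerivAt (fun s => 1 + exp (-s)) (-exp (-t)) t := by
      simpa using ((hasDerivAt_neg t).exp).const_add 1
    simpa using hinner.log (by positivity)
  have hquot : HasDerivAt (fun s => s / (1 + exp s))
      ((1 * (1 + exp t) - t * exp t) / (1 + exp t) ^ 2) t :=
    (hasDerivAt_id t).div ((hasDerivAt_exp t).const_add 1) (by positivity)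
  refine (hlog.add hquot).congr_deriv ?_
  rw [exp_neg]
  field_simp
  ring

lemma strictMonoOn_psiFun : StrictMonoOn psiFun (Iic 0) := by
  refine strictMonoOn_of_hasDerivWithinAt_pos (convex_Iic 0)
    (fun t _ => (hasDerivAt_psiFun t).continuousAt.continuousWithinAt)
    (fun t _ => (hasDerivAt_psiFun t).hasDerivWithinAt) fun t ht => ?_
  rw [interior_Iic, mem_Iio] at ht
  have : 0 < -t := neg_pos.mpr ht
  positivity

theorem stmt_14 :
    StrictMonoOn psiFun (Set.Iio (0:ℝ)) ∧
    StrictAntiOn (fun t : ℝ => - Real.log (1 + Real.exp (-t)) - t / (1 + Real.exp t))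
      (Set.Iic (0:ℝ)) := by
  refine ⟨strictMonoOn_psiFun.mono Iio_subset_Iic_self, ?_⟩
  convert strictMonoOn_psiFun.neg using 2 with t
  rw [psiFun, neg_add]
  ring
end

section
/- Fix ξ₀ ∈ (0,1) and m ∈ [0,2]. Then sup { inf_{y∈[-1,1]} (y ξ₀ - H(y)) : H : [-1,1] → ℝ non-decreasing, H(-1)=0, H(1)=m, 0 ≤ H' ≤ 1 a.e. } = min(-ξ₀, ξ₀ - m). -/
/-- `H` is an admissible profile primitive: `H(-1)=0`, `H(1)=m`, and `H` is
non-decreasing and 1-Lipschitz on `[-1,1]` (equivalently, absolutely continuous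
with derivative in `[0,1]` almost everywhere). -/
def Admissible (m : ℝ) (H : ℝ → ℝ) : Prop :=
  H (-1) = 0 ∧ H 1 = m ∧
  ∀ x y : ℝ, -1 ≤ x → x ≤ y → y ≤ 1 → 0 ≤ H y - H x ∧ H y - H x ≤ y - x

theorem stmt_15 (ξ₀ m : ℝ) (hξ : ξ₀ ∈ Set.Ioo (0:ℝ) 1) (hm : m ∈ Set.Icc (0:ℝ) 2) :
    sSup {v : ℝ | ∃ H : ℝ → ℝ, Admissible m H ∧
        v = sInf {z : ℝ | ∃ y ∈ Set.Icc (-1:ℝ) 1, z = y * ξ₀ - H y}}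
      = min (-ξ₀) (ξ₀ - m) := by
  obtain ⟨hξ0, hξ1⟩ := hξ
  obtain ⟨hm0, hm2⟩ := hm
  set H₀ : ℝ → ℝ := fun y => max 0 (y - (1 - m)) with hH₀
  have hAdm : Admissible m H₀ := by
    refine ⟨by simp [hH₀]; linarith, by simp [hH₀]; linarith, ?_⟩
    intro x y hx hxy hy
    simp only [hH₀]
    rcases le_total (x - (1 - m)) 0 with h1 | h1 <;>
      rcases le_total (y - (1 - m)) 0 with h2 | h2 <;>
      constructor <;>
      simp [max_eq_left, max_eq_right, h1, h2] <;> linarith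
  have hlow : ∀ z ∈ {z : ℝ | ∃ y ∈ Set.Icc (-1:ℝ) 1, z = y * ξ₀ - H₀ y},
      min (-ξ₀) (ξ₀ - m) ≤ z := by
    rintro z ⟨y, ⟨hy1, hy2⟩, rfl⟩
    simp only [hH₀]
    rcases le_total (y - (1 - m)) 0 with h | h
    · rw [max_eq_left h]
      have : -ξ₀ ≤ y * ξ₀ - 0 := by nlinarith
      exact le_trans (min_le_left _ _) this
    · rw [max_eq_right h]
      have : ξ₀ - m ≤ y * ξ₀ - (y - (1 - m)) := by nlinarith
      exact le_trans (min_le_right _ _) this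
  have hmem1 : (-ξ₀) ∈ {z : ℝ | ∃ y ∈ Set.Icc (-1:ℝ) 1, z = y * ξ₀ - H₀ y} := by
    refine ⟨-1, ⟨le_refl _, by norm_num⟩, ?_⟩
    have : H₀ (-1) = 0 := hAdm.1
    rw [this]; ring
  have hmem2 : (ξ₀ - m) ∈ {z : ℝ | ∃ y ∈ Set.Icc (-1:ℝ) 1, z = y * ξ₀ - H₀ y} := by
    refine ⟨1, ⟨by norm_num, le_refl _⟩, ?_⟩
    have : H₀ 1 = m := hAdm.2.1
    rw [this]; ring
  have hInf : sInf {z : ℝ | ∃ y ∈ Set.Icc (-1:ℝ) 1, z = y * ξ₀ - H₀ y}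
      = min (-ξ₀) (ξ₀ - m) := by
    apply IsLeast.csInf_eq
    constructor
    · rcases min_cases (-ξ₀) (ξ₀ - m) with ⟨h, _⟩ | ⟨h, _⟩ <;> rw [h]
      · exact hmem1
      · exact hmem2
    · exact hlow
  apply IsGreatest.csSup_eq
  constructor
  · exact ⟨H₀, hAdm, hInf.symm⟩
  · rintro v ⟨H, ⟨hH1, hH2, hHL⟩, rfl⟩
    have hbdd : BddBelow {z : ℝ | ∃ y ∈ Set.Icc (-1:ℝ) 1, z = y * ξ₀ - H y} := by
      refine ⟨-ξ₀ - 2, ?_⟩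
      rintro z ⟨y, ⟨hy1, hy2⟩, rfl⟩
      have h1 : H y - H (-1) ≤ y - (-1) := (hHL (-1) y (le_refl _) hy1 hy2).2
      have : H y ≤ y + 1 := by rw [hH1] at h1; linarith
      nlinarith
    have h1 : sInf {z : ℝ | ∃ y ∈ Set.Icc (-1:ℝ) 1, z = y * ξ₀ - H y} ≤ -ξ₀ := by
      apply csInf_le hbdd
      exact ⟨-1, ⟨le_refl _, by norm_num⟩, by rw [hH1]; ring⟩
    have h2 : sInf {z : ℝ | ∃ y ∈ Set.Icc (-1:ℝ) 1, z = y * ξ₀ - H y} ≤ ξ₀ - m := by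
      apply csInf_le hbdd
      exact ⟨1, ⟨by norm_num, le_refl _⟩, by rw [hH2]; ring⟩
    exact le_min h1 h2
end

section
/- Fix ξ₀ ∈ (0,1) and m ∈ [0,2]. Then inf { inf_{y∈[-1,1]} (y ξ₀ - H(y)) : H : [-1,1] → ℝ absolutely continuous, H(-1)=0, H(1)=m, 0 ≤ H' ≤ 1 a.e. } = (m-1)ξ₀ - m, attained by H(y) = min(y+1, m). -/
lemma adm_lb (ξ₀ m : ℝ) (hξ : ξ₀ ∈ Set.Ioo (0:ℝ) 1) (hm : m ∈ Set.Icc (0:ℝ) 2)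
    {H : ℝ → ℝ} (hH : Admissible m H) {y : ℝ} (hy : y ∈ Set.Icc (-1:ℝ) 1) :
    (m - 1) * ξ₀ - m ≤ y * ξ₀ - H y := by
  obtain ⟨h0, h1, hlip⟩ := hH
  obtain ⟨hy1, hy2⟩ := hy
  have hub1 : H y ≤ y + 1 := by
    have := (hlip (-1) y (le_refl _) hy1 hy2).2
    linarith [h0 ▸ this]
  have hub2 : H y ≤ m := by
    have := (hlip y 1 hy1 hy2 (le_refl _)).1
    linarith [h1 ▸ this]
  obtain ⟨hξ1, hξ2⟩ := hξ
  rcases le_total (y + 1) m with h | h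
  · nlinarith [mul_nonneg (sub_nonneg.2 h) (sub_nonneg.2 hξ2.le)]
  · nlinarith [mul_nonneg (sub_nonneg.2 h) hξ1.le]

lemma adm_min (m : ℝ) (hm : m ∈ Set.Icc (0:ℝ) 2) :
    Admissible m (fun y => min (y + 1) m) := by
  obtain ⟨hm0, hm2⟩ := hm
  refine ⟨show min ((-1:ℝ)+1) m = 0 by rw [neg_add_cancel]; exact min_eq_left hm0, show min ((1:ℝ)+1) m = m from min_eq_right (by linarith), ?_⟩
  intro x y hx hxy hy
  constructor
  · rcases le_total (x + 1) m with h | h <;> rcases le_total (y + 1) m with h' | h' <;>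
      simp only [min_eq_left, min_eq_right, h, h'] <;> simp_all <;> linarith
  · rcases le_total (x + 1) m with h | h <;> rcases le_total (y + 1) m with h' | h' <;>
      simp only [min_eq_left, min_eq_right, h, h'] <;> simp_all <;> linarith

lemma inner_inf (ξ₀ m : ℝ) (hξ : ξ₀ ∈ Set.Ioo (0:ℝ) 1) (hm : m ∈ Set.Icc (0:ℝ) 2) :
    sInf {z : ℝ | ∃ y ∈ Set.Icc (-1:ℝ) 1, z = y * ξ₀ - min (y + 1) m}
      = (m - 1) * ξ₀ - m := by
  obtain ⟨hm0, hm2⟩ := hm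
  apply le_antisymm
  · apply csInf_le
    · exact ⟨(m - 1) * ξ₀ - m, fun z ⟨y, hy, hz⟩ => hz ▸
        adm_lb ξ₀ m hξ ⟨hm0, hm2⟩ (adm_min m ⟨hm0, hm2⟩) hy⟩
    · exact ⟨m - 1, ⟨by linarith, by linarith⟩, by rw [min_eq_right (by linarith)]⟩
  · apply le_csInf
    · exact ⟨(m - 1) * ξ₀ - m, m - 1, ⟨by linarith, by linarith⟩,
        by rw [min_eq_right (by linarith)]⟩
    · rintro z ⟨y, hy, rfl⟩
      exact adm_lb ξ₀ m hξ ⟨hm0, hm2⟩ (adm_min m ⟨hm0, hm2⟩) hy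

theorem stmt_16 (ξ₀ m : ℝ) (hξ : ξ₀ ∈ Set.Ioo (0:ℝ) 1) (hm : m ∈ Set.Icc (0:ℝ) 2) :
    sInf {v : ℝ | ∃ H : ℝ → ℝ, Admissible m H ∧
        v = sInf {z : ℝ | ∃ y ∈ Set.Icc (-1:ℝ) 1, z = y * ξ₀ - H y}}
      = (m - 1) * ξ₀ - m ∧
    Admissible m (fun y => min (y + 1) m) ∧
    sInf {z : ℝ | ∃ y ∈ Set.Icc (-1:ℝ) 1, z = y * ξ₀ - min (y + 1) m}
      = (m - 1) * ξ₀ - m := by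
  obtain ⟨hm0, hm2⟩ := hm
  refine ⟨?_, adm_min m ⟨hm0, hm2⟩, inner_inf ξ₀ m hξ ⟨hm0, hm2⟩⟩
  apply le_antisymm
  · apply csInf_le
    · refine ⟨(m - 1) * ξ₀ - m, ?_⟩
      rintro v ⟨H, hH, rfl⟩
      apply le_csInf
      · exact ⟨(m - 1) * ξ₀ - H (m - 1), m - 1, ⟨by linarith, by linarith⟩, rfl⟩
      · rintro z ⟨y, hy, rfl⟩
        exact adm_lb ξ₀ m hξ ⟨hm0, hm2⟩ hH hy
    · exact ⟨fun y => min (y + 1) m, adm_min m ⟨hm0, hm2⟩,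
        (inner_inf ξ₀ m hξ ⟨hm0, hm2⟩).symm⟩
  · apply le_csInf
    · exact ⟨(m - 1) * ξ₀ - m, fun y => min (y + 1) m, adm_min m ⟨hm0, hm2⟩,
        (inner_inf ξ₀ m hξ ⟨hm0, hm2⟩).symm⟩
    · rintro v ⟨H, hH, rfl⟩
      apply le_csInf
      · exact ⟨(m - 1) * ξ₀ - H (m - 1), m - 1, ⟨by linarith, by linarith⟩, rfl⟩
      · rintro z ⟨y, hy, rfl⟩
        exact adm_lb ξ₀ m hξ ⟨hm0, hm2⟩ hH hy
end
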